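/- arXiv:1306.2930 — 4 statements merged into one kernel-verified Lean document; each statement's English description precedes it below -/
import Mathlib

section
/- For a connected finite graph G and a connected partition π of G, let F(π) be the set of edges of G whose endpoints lie in distinct blocks of π. Then for any two connected partitions π, π' of G, F of the common-connected-refinement of π and π' equals F(π) ∪ F(π'). -/
open SimpleGraph
open scoped Classical

variable {V : Type*} [Fintype V] [DecidableEq V]

/-- `π` is a connected partition of `G`: every block (equivalence class) of `π`
induces a connected subgraph. -/
def ConnPart (G : SimpleGraph V) (π : Setoid V) : Prop :=
  ∀ c ∈ π.classes, (G.induce c).Connected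

/-- `F(π)`: the set of edges of `G` whose endpoints lie in distinct blocks of `π`. -/
def crossF (G : SimpleGraph V) (π : Setoid V) : Set (Sym2 V) :=
  {e | e ∈ G.edgeSet ∧ ∃ u v, e = s(u, v) ∧ ¬ π.r u v}

/-- Auxiliary graph: edges of `G` lying inside a block of the common refinement of
`π` and `π'`. -/
def meetGraph (G : SimpleGraph V) (π π' : Setoid V) : SimpleGraph V where
  Adj u v := G.Adj u v ∧ π.r u v ∧ π'.r u v
  symm := ⟨fun u v h => ⟨h.1.symm, π.iseqv.symm h.2.1, π'.iseqv.symm h.2.2⟩⟩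
  loopless := ⟨fun u h => G.loopless.irrefl u h.1⟩

/-- The common-connected-refinement of `π` and `π'`: its blocks are the connected
components of the subgraphs induced on the blocks of the common refinement. -/
def connMeet (G : SimpleGraph V) (π π' : Setoid V) : Setoid V :=
  (meetGraph G π π').reachableSetoid

/-! `crossF G σ` only depends on how `σ` relates the two endpoints of each edge of `G`. On such
pairs `connMeet G π π'` agrees with `π ⊓ π'`, because an edge inside a block of `π ⊓ π'` is itself
an edge of `meetGraph G π π'`; and `crossF` turns `⊓` into `∪` by De Morgan. -/

section
variable {α : Type*} {G : SimpleGraph α}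

lemma mk_mem_crossF {σ : Setoid α} {u v : α} :
    s(u, v) ∈ crossF G σ ↔ G.Adj u v ∧ ¬ σ.r u v := by
  refine ⟨?_, fun ⟨huv, hr⟩ => ⟨huv, u, v, rfl, hr⟩⟩
  rintro ⟨huv, a, b, hab, hr⟩
  refine ⟨huv, ?_⟩
  rcases Sym2.eq_iff.1 hab with ⟨rfl, rfl⟩ | ⟨rfl, rfl⟩
  exacts [hr, fun h => hr (σ.symm h)]

lemma crossF_congr {σ τ : Setoid α} (h : ∀ ⦃u v⦄, G.Adj u v → (σ.r u v ↔ τ.r u v)) :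
    crossF G σ = crossF G τ := by
  ext e
  induction e using Sym2.ind with
  | h u v => simp only [mk_mem_crossF, and_congr_right_iff]; exact fun huv => not_congr (h huv)

lemma crossF_inf (σ τ : Setoid α) : crossF G (σ ⊓ τ) = crossF G σ ∪ crossF G τ := by
  ext e
  induction e using Sym2.ind with
  | h u v =>
    simp only [Set.mem_union, mk_mem_crossF]
    change G.Adj u v ∧ ¬(σ.r u v ∧ τ.r u v) ↔ _
    tauto

lemma connMeet_le_inf (π π' : Setoid α) : connMeet G π π' ≤ π ⊓ π' := by
  rintro u v ⟨w⟩
  induction w with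
  | nil => exact (π ⊓ π').refl _
  | cons h _ ih => exact (π ⊓ π').trans ⟨h.2.1, h.2.2⟩ ih

lemma connMeet_r_iff_of_adj {π π' : Setoid α} {u v : α} (huv : G.Adj u v) :
    (connMeet G π π').r u v ↔ (π ⊓ π').r u v :=
  ⟨fun h => connMeet_le_inf π π' h, fun h => Adj.reachable ⟨huv, h⟩⟩

end

theorem stmt_2_general (G : SimpleGraph V) (π π' : Setoid V) :
    crossF G (connMeet G π π') = crossF G π ∪ crossF G π' := by
  rw [crossF_congr fun _ _ => connMeet_r_iff_of_adj, crossF_inf]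

/-- `F` of the common-connected-refinement of two connected partitions is the
union of the `F`'s. -/
theorem stmt_2 (G : SimpleGraph V) (hG : G.Connected) (π π' : Setoid V)
    (hπ : ConnPart G π) (hπ' : ConnPart G π') :
    crossF G (connMeet G π π') = crossF G π ∪ crossF G π' :=
  stmt_2_general G π π'
end

section
/- A connected partition π of a connected graph G has exactly two blocks if and only if F(π) is a minimal nonempty element among the sets {F(σ) : σ a connected partition of G with more than one block}, ordered by inclusion. Equivalently, the atoms of the dual connected partition lattice are exactly the connected cuts of G. -/
/-! If `π` has two blocks and `σ ≠ ⊤` is a connected partition with `F(σ) ⊆ F(π)`, then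
every edge inside a block of `π` lies inside a block of `σ`; as the blocks of `π` are
connected, `π` refines `σ`, and a two-block partition is a coatom of the partition lattice,
so `σ = π`.

Conversely, if some edge `uv` of `F(π)` has both ends outside the block `A` of a vertex `a`,
split every block of the cut `{A, Aᶜ}` into its connected components. The result `σ` is a
connected partition with `F(σ) = F(A, Aᶜ) ⊆ F(π)`, and `σ ≠ ⊤`, yet `uv ∉ F(σ)`. -/

open SimpleGraph
open scoped Classical

variable {V : Type*} [Fintype V] [DecidableEq V]

theorem Setoid.ncard_classes_eq_two_iff {α : Type*} (r : Setoid α) :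
    r.classes.ncard = 2 ↔ ∃ x y, ¬ r x y ∧ ∀ z, r z x ∨ r z y := by
  rw [← Nat.card_coe_set_eq, ← Nat.card_congr r.quotientEquivClasses, Nat.card_eq_two_iff]
  constructor
  · rintro ⟨⟨x⟩, ⟨y⟩, hxy, huniv⟩
    refine ⟨x, y, fun h => hxy (Quotient.sound h), fun z => ?_⟩
    have hz : (⟦z⟧ : Quotient r) ∈ ({⟦x⟧, ⟦y⟧} : Set (Quotient r)) := huniv ▸ Set.mem_univ _
    rcases hz with hz | hz
    · exact Or.inl (Quotient.exact hz)
    · exact Or.inr (Quotient.exact hz)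
  · rintro ⟨x, y, hxy, hcover⟩
    refine ⟨⟦x⟧, ⟦y⟧, fun h => hxy (Quotient.exact h), Set.eq_univ_of_forall ?_⟩
    rintro ⟨z⟩
    rcases hcover z with hz | hz
    · exact Or.inl (Quotient.sound hz)
    · exact Or.inr (Quotient.sound hz)

theorem Setoid.isCoatom_of_ncard_classes_eq_two {α : Type*} {r : Setoid α}
    (hr : r.classes.ncard = 2) : IsCoatom r := by
  obtain ⟨x, y, hxy, hcover⟩ := r.ncard_classes_eq_two_iff.1 hr
  refine ⟨fun h => hxy (Setoid.eq_top_iff.1 h x y), fun s hlt => Setoid.eq_top_iff.2 ?_⟩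
  obtain ⟨a, b, hab, hnab⟩ : ∃ a b, s a b ∧ ¬ r a b := by
    simpa [Setoid.le_def] using hlt.not_ge
  have hsxy : s x y := by
    rcases hcover a with ha | ha <;> rcases hcover b with hb | hb
    · exact absurd (r.trans ha (r.symm hb)) hnab
    · exact s.trans (s.symm (hlt.le ha)) (s.trans hab (hlt.le hb))
    · exact s.trans (s.symm (hlt.le hb)) (s.trans (s.symm hab) (hlt.le ha))
    · exact absurd (r.trans ha (r.symm hb)) hnab
  have hx : ∀ z, s z x := fun z =>
    (hcover z).elim (hlt.le ·) (fun h => s.trans (hlt.le h) (s.symm hsxy))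
  exact fun a b => s.trans (hx a) (s.symm (hx b))

section

variable {V : Type*} {G : SimpleGraph V}

theorem SimpleGraph.Reachable.rel {r : Setoid V} (hadj : ∀ u v, G.Adj u v → r u v) {u v : V}
    (h : G.Reachable u v) : r u v := by
  obtain ⟨w⟩ := h
  induction w with
  | nil => exact r.refl _
  | cons huv _ ih => exact r.trans (hadj _ _ huv) ih

theorem mk_mem_crossF_iff {π : Setoid V} {u v : V} (huv : G.Adj u v) :
    s(u, v) ∈ crossF G π ↔ ¬ π u v := by
  refine ⟨?_, fun h => ⟨huv, u, v, rfl, h⟩⟩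
  rintro ⟨-, a, b, hab, hne⟩
  rcases Sym2.eq_iff.1 hab with ⟨rfl, rfl⟩ | ⟨rfl, rfl⟩
  · exact hne
  · exact fun h => hne (π.symm h)

theorem crossF_subset_crossF_iff {π σ : Setoid V} :
    crossF G σ ⊆ crossF G π ↔ ∀ u v, G.Adj u v → π u v → σ u v := by
  constructor
  · intro hsub u v huv hπ
    by_contra hσ
    exact (mk_mem_crossF_iff huv).1 (hsub ((mk_mem_crossF_iff huv).2 hσ)) hπ
  · rintro h e ⟨he, u, v, rfl, hσ⟩
    exact (mk_mem_crossF_iff he).2 fun hπ => hσ (h u v he hπ)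

theorem crossF_anti {π σ : Setoid V} (h : π ≤ σ) : crossF G σ ⊆ crossF G π :=
  crossF_subset_crossF_iff.2 fun _ _ _ hπ => h hπ

theorem crossF_nonempty (hG : G.Connected) {π : Setoid V} (hπ : π ≠ ⊤) :
    (crossF G π).Nonempty := by
  by_contra hempty
  refine hπ (Setoid.eq_top_iff.2 fun u v => (hG u v).rel fun a b hab => ?_)
  by_contra h
  exact hempty ⟨_, (mk_mem_crossF_iff hab).2 h⟩

theorem ConnPart.le_of_crossF_subset {π σ : Setoid V} (hπ : ConnPart G π)
    (hsub : crossF G σ ⊆ crossF G π) : π ≤ σ := by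
  intro x y hxy
  have hblock := (hπ _ (π.mem_classes y)).preconnected ⟨x, hxy⟩ ⟨y, π.refl y⟩
  refine (Setoid.comap_rel Subtype.val σ _ _).1 (hblock.rel fun a b hab => ?_)
  exact crossF_subset_crossF_iff.1 hsub a b hab (π.trans a.2 (π.symm b.2))

theorem connMeet_le_left (π π' : Setoid V) : connMeet G π π' ≤ π :=
  fun _ _ h => Reachable.rel (G := meetGraph G π π') (fun _ _ hab => hab.2.1) h

theorem connPart_connMeet (π π' : Setoid V) : ConnPart G (connMeet G π π') := by
  rintro _ ⟨y, rfl⟩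
  have hC := ((meetGraph G π π').connectedComponentMk y).maximal_connected_induce_supp.1
  have hsupp : ((meetGraph G π π').connectedComponentMk y).supp = {x | connMeet G π π' x y} := by
    ext x
    exact (ConnectedComponent.mem_supp_iff _ _).trans ConnectedComponent.eq
  rw [← hsupp]
  exact hC.mono fun _ _ (h : (meetGraph G π π').Adj _ _) => h.1

theorem crossF_connMeet_top (τ : Setoid V) : crossF G (connMeet G τ ⊤) = crossF G τ := by
  refine (crossF_subset_crossF_iff.2 ?_).antisymm (crossF_anti (connMeet_le_left τ ⊤))
  exact fun u v huv hτ => Adj.reachable ⟨huv, hτ, trivial⟩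

theorem exists_connPart_ne_top_crossF_subset {π : Setoid V} {u v a : V} (huv : G.Adj u v)
    (hu : ¬ π a u) (hv : ¬ π a v) :
    ∃ σ, ConnPart G σ ∧ σ ≠ ⊤ ∧ crossF G σ ⊆ crossF G π ∧ σ u v := by
  set τ : Setoid V := Setoid.ker (π a ·)
  have hτ : ∀ x y, τ x y ↔ (π a x ↔ π a y) := fun _ _ => Setoid.ker_def.trans eq_iff_iff
  refine ⟨connMeet G τ ⊤, connPart_connMeet τ ⊤, fun htop => ?_, ?_, ?_⟩
  · exact hu (((hτ a u).1 (connMeet_le_left τ ⊤ (Setoid.eq_top_iff.1 htop a u))).1 (π.refl a))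
  · rw [crossF_connMeet_top]
    exact crossF_anti fun x y hxy => (hτ x y).2 ⟨(π.trans · hxy), (π.trans · (π.symm hxy))⟩
  · exact Adj.reachable ⟨huv, (hτ u v).2 (iff_of_false hu hv), trivial⟩

end

/-- A connected partition has exactly two blocks iff `F(π)` is a minimal nonempty
element among the sets `F(σ)` for connected partitions `σ` with more than one
block (i.e. `σ ≠ ⊤`), ordered by inclusion. -/
theorem stmt_4 (G : SimpleGraph V) (hG : G.Connected) (π : Setoid V)
    (hπ : ConnPart G π) :
    π.classes.ncard = 2 ↔
      (crossF G π).Nonempty ∧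
        ∀ σ : Setoid V, ConnPart G σ → σ ≠ ⊤ →
          crossF G σ ⊆ crossF G π → crossF G σ = crossF G π := by
  constructor
  · intro h2
    have hcoatom := Setoid.isCoatom_of_ncard_classes_eq_two h2
    refine ⟨crossF_nonempty hG hcoatom.1, fun σ hσ hσtop hsub => ?_⟩
    rw [(hcoatom.le_iff.1 (hπ.le_of_crossF_subset hsub)).resolve_left hσtop]
  · rintro ⟨⟨_, hedge, u, v, rfl, hπuv⟩, hmin⟩
    have huv : G.Adj u v := hedge
    refine π.ncard_classes_eq_two_iff.2 ⟨u, v, hπuv, fun a => ?_⟩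
    by_contra! ha
    obtain ⟨σ, hσ, hσtop, hsub, hσuv⟩ := exists_connPart_ne_top_crossF_subset huv ha.1 ha.2
    have huv_mem : s(u, v) ∈ crossF G σ := hmin σ hσ hσtop hsub ▸ (mk_mem_crossF_iff huv).2 hπuv
    exact (mk_mem_crossF_iff huv).1 huv_mem hσuv
end

section
/- Every connected partition of a connected graph G with more than one block is the meet (in the refinement order) of connected cuts; equivalently, the dual connected partition lattice L*_G is an atomic lattice. -/
/-!
Let `u`, `v` lie in different blocks of the connected partition `π`, let `K` be the block of `v`
and `A` the component of `G - K` containing `u`. Every block other than `K` is connected and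
avoids `K`, so `A` is a union of blocks. `A` is connected, and so is its complement, since every
other component of `G - K` is joined to the connected set `K` by an edge. Hence `{A, Aᶜ}` is a
connected cut coarser than `π` that separates `u` from `v`, and `π` is the meet of all such cuts.
-/

open SimpleGraph
open scoped Classical

variable {V : Type*} [Fintype V] [DecidableEq V]

namespace SimpleGraph.ComponentCompl

variable {W : Type*} {G : SimpleGraph W} {K : Set W}

theorem connected_induce (C : G.ComponentCompl K) : (G.induce (C : Set W)).Connected := by
  let f : C.toSimpleGraph →g G.induce (C : Set W) :=
    ⟨fun x => ⟨x.1.1, x.1.2, x.2⟩, fun h => h⟩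
  refine C.connected_toSimpleGraph.map f ?_
  rintro ⟨x, hxK, hxC⟩
  exact ⟨⟨⟨x, hxK⟩, hxC⟩, rfl⟩

theorem subset_of_preconnected (C : G.ComponentCompl K) {s : Set W}
    (hs : (G.induce s).Preconnected) (hKs : Disjoint K s) {x : W} (hxs : x ∈ s)
    (hxC : x ∈ C) : s ⊆ C := by
  intro y hys
  have hsK : s ⊆ Kᶜ := hKs.subset_compl_left
  obtain ⟨hxK, rfl⟩ := hxC
  refine ⟨hsK hys, ConnectedComponent.sound ?_⟩
  exact ((hs ⟨y, hys⟩ ⟨x, hxs⟩).map (induceHomOfLE G hsK).toHom)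

theorem connected_induce_compl (hG : G.Preconnected) (hK : (G.induce K).Connected)
    (C : G.ComponentCompl K) : (G.induce (C : Set W)ᶜ).Connected := by
  obtain ⟨k, hk⟩ := hK.nonempty
  have hKC : K ⊆ (C : Set W)ᶜ := C.disjoint_right.subset_compl_right
  refine induce_connected_of_patches k (hKC hk) fun {w} hw => ?_
  by_cases hwK : w ∈ K
  · exact ⟨K, hKC, hk, hwK, hK.preconnected _ _⟩
  set D := G.componentComplMk hwK
  obtain ⟨⟨d, k'⟩, hdD, hk'K, hdk'⟩ := exists_adj_boundary_pair hG ⟨k, hk⟩ D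
  have hDC : Disjoint (D : Set W) C := by
    refine ComponentCompl.pairwise_disjoint fun h => hw ?_
    exact h ▸ componentComplMk_mem G hwK
  refine ⟨K ∪ D, Set.union_subset hKC hDC.subset_compl_right, Or.inl hk,
    Or.inr (componentComplMk_mem G hwK), ?_⟩
  exact (connected_induce_union hK.preconnected D.connected_induce.preconnected hk'K hdD
    hdk'.symm).preconnected _ _

end SimpleGraph.ComponentCompl

namespace Setoid

variable {α : Type*} {A : Set α}

theorem classes_ker_mem (hA : A.Nonempty) (hAc : Aᶜ.Nonempty) :
    (Setoid.ker (· ∈ A)).classes = {A, Aᶜ} := by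
  obtain ⟨a, ha⟩ := hA
  obtain ⟨b, hb⟩ := hAc
  ext c
  constructor
  · rintro ⟨y, rfl⟩
    by_cases hy : y ∈ A
    · left; ext x; simp [Setoid.ker_def, hy]
    · right; ext x; simp [Setoid.ker_def, hy]
  · rintro (rfl | rfl)
    · exact ⟨a, by ext x; simp [Setoid.ker_def, ha]⟩
    · exact ⟨b, by ext x; simp [Setoid.ker_def, Set.notMem_of_mem_compl hb]⟩

theorem ncard_classes_ker_mem (hA : A.Nonempty) (hAc : Aᶜ.Nonempty) :
    (Setoid.ker (· ∈ A)).classes.ncard = 2 := by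
  rw [classes_ker_mem hA hAc]
  obtain ⟨a, ha⟩ := hA
  exact Set.ncard_pair fun h => (h ▸ ha : a ∈ Aᶜ) ha

end Setoid

section ConnPart

variable {W : Type*} {G : SimpleGraph W}

theorem connPart_ker_mem {A : Set W} (hA : (G.induce A).Connected)
    (hAc : (G.induce Aᶜ).Connected) : ConnPart G (Setoid.ker (· ∈ A)) := by
  obtain ⟨a, ha⟩ := hA.nonempty
  obtain ⟨b, hb⟩ := hAc.nonempty
  rw [ConnPart, Setoid.classes_ker_mem ⟨a, ha⟩ ⟨b, hb⟩]
  rintro c (rfl | rfl)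
  exacts [hA, hAc]

theorem ConnPart.exists_cut_separating (hG : G.Connected) {π : Setoid W}
    (hπ : ConnPart G π) {u v : W} (huv : ¬ π u v) :
    ∃ A : Set W, u ∈ A ∧ v ∉ A ∧ π ≤ Setoid.ker (· ∈ A) ∧
      (G.induce A).Connected ∧ (G.induce Aᶜ).Connected := by
  set K := {x | π x v}
  have huK : u ∉ K := huv
  set C := G.componentComplMk huK
  have hK : (G.induce K).Connected := hπ _ (π.mem_classes v)
  have hsat : ∀ x y, π x y → x ∈ C → y ∈ C := fun x y hxy hxC => by
    have hKx : Disjoint K {z | π z x} := Set.disjoint_left.mpr fun z hzv hzx =>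
      C.notMem_of_mem hxC (π.trans' (π.symm' hzx) hzv)
    exact C.subset_of_preconnected (hπ _ (π.mem_classes x)).preconnected hKx (π.refl' x) hxC
      (π.symm' hxy)
  refine ⟨C, componentComplMk_mem G huK, fun hvC => C.notMem_of_mem hvC (π.refl' v),
    fun x y hxy => ?_, C.connected_induce, C.connected_induce_compl hG.preconnected hK⟩
  exact Setoid.ker_def.mpr (propext ⟨hsat x y hxy, hsat y x (π.symm' hxy)⟩)

end ConnPart

theorem stmt_5_general (G : SimpleGraph V) (hG : G.Connected) (π : Setoid V)
    (hπ : ConnPart G π) :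
    ∃ S : Set (Setoid V),
      (∀ σ ∈ S, ConnPart G σ ∧ σ.classes.ncard = 2) ∧
      (∀ σ ∈ S, π ≤ σ) ∧
      ∀ τ : Setoid V, ConnPart G τ → (∀ σ ∈ S, τ ≤ σ) → τ ≤ π := by
  refine ⟨{σ | (ConnPart G σ ∧ σ.classes.ncard = 2) ∧ π ≤ σ}, fun σ h => h.1, fun σ h => h.2, ?_⟩
  intro τ _ hτ a b hab
  by_contra hπab
  obtain ⟨A, haA, hbA, hπA, hA, hAc⟩ := hπ.exists_cut_separating hG hπab
  have hcut : (ConnPart G (Setoid.ker (· ∈ A)) ∧ (Setoid.ker (· ∈ A)).classes.ncard = 2) ∧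
      π ≤ Setoid.ker (· ∈ A) :=
    ⟨⟨connPart_ker_mem hA hAc, Setoid.ncard_classes_ker_mem ⟨a, haA⟩ ⟨b, hbA⟩⟩, hπA⟩
  exact hbA (Setoid.ker_def.mp (hτ _ hcut hab) ▸ haA)

/-- Every connected partition with more than one block is the greatest lower bound,
in the refinement order restricted to connected partitions, of a set of connected
cuts (connected partitions with exactly two blocks). -/
theorem stmt_5 (G : SimpleGraph V) (hG : G.Connected) (π : Setoid V)
    (hπ : ConnPart G π) (hne : π ≠ ⊤) :
    ∃ S : Set (Setoid V),
      (∀ σ ∈ S, ConnPart G σ ∧ σ.classes.ncard = 2) ∧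
      (∀ σ ∈ S, π ≤ σ) ∧
      ∀ τ : Setoid V, ConnPart G τ → (∀ σ ∈ S, τ ≤ σ) → τ ≤ π :=
  stmt_5_general G hG π hπ
end

section
/- Let C_1 = {U_1, W_1} and C_2 = {U_2, W_2} be cuts of a connected graph G with sink v_n ∈ W_1 ∩ W_2, and suppose there is an edge e with e_1 ∈ U_1 ∩ U_2. Let W_3 be the vertex set of the connected component of G[W_1 ∩ W_2] containing v_n, and set C_3 = {V \ W_3, W_3}. Then C_3 is a connected cut (both G[V\W_3] and G[W_3] are connected, assuming U_1 ∪ U_2 induces a connected subgraph), and the cut-set of C_3 is contained in the union of the cut-sets of C_1 and C_2. -/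
open SimpleGraph
open scoped Classical

variable {V : Type*} [Fintype V] [DecidableEq V]

/-- The cut-set of the cut `{U, Uᶜ}`: edges with one endpoint in `U` and one
outside `U`. -/
def cutsetS (G : SimpleGraph V) (U : Set V) : Set (Sym2 V) :=
  {e | e ∈ G.edgeSet ∧ ∃ u v, e = s(u, v) ∧ u ∈ U ∧ v ∉ U}


/-
A vertex outside `W₃` that lies in `W₁ ∩ W₂` can only leave `W₁ ∩ W₂` (along a walk towards
`U₁ ∩ U₂`) without meeting `W₃`, since `W₃` is closed under adjacency inside `W₁ ∩ W₂`; so every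
vertex of `V \ W₃` is joined inside `V \ W₃` to the connected set `U₁ ∪ U₂`. The same closedness
shows that an edge leaving `W₃` ends in `U₁ ∪ U₂`.
-/

namespace SimpleGraph

section InducedComponent

variable {α : Type*} (G : SimpleGraph α)

def inducedComponent (T : Set α) (t : T) : Set α :=
  {v | ∃ h : v ∈ T, (G.induce T).Reachable ⟨v, h⟩ t}

variable {G} {T : Set α} {t : T}

lemma inducedComponent_subset : G.inducedComponent T t ⊆ T :=
  fun _ ⟨h, _⟩ ↦ h

lemma mem_inducedComponent_of_adj {u v : α} (hu : u ∈ T) (huv : G.Adj u v)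
    (hv : v ∈ G.inducedComponent T t) : u ∈ G.inducedComponent T t := by
  obtain ⟨hvT, hvt⟩ := hv
  exact ⟨hu, (Adj.reachable (show (G.induce T).Adj ⟨u, hu⟩ ⟨v, hvT⟩ from huv)).trans hvt⟩

variable (G T t)

lemma connected_induce_inducedComponent : (G.induce (G.inducedComponent T t)).Connected := by
  refine G.induce_connected_of_patches t ⟨t.2, .rfl⟩ ?_
  rintro v ⟨hv, ⟨p⟩⟩
  let q := (p.map (Embedding.induce T).toHom).reverse
  refine ⟨{w | w ∈ q.support}, ?_, q.start_mem_support, q.end_mem_support,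
    q.connected_induce_support.preconnected _ _⟩
  intro w hw
  simp only [q, Walk.support_reverse, Walk.support_map, List.mem_reverse, List.mem_map,
    Set.mem_ofPred_eq] at hw
  obtain ⟨w, hw, rfl⟩ := hw
  exact ⟨w.2, (p.dropUntil w hw).reachable⟩

variable {G T t}

lemma exists_reachable_compl_inducedComponent {x y : α} (p : G.Walk x y)
    (hx : x ∉ G.inducedComponent T t) (hy : y ∉ T) :
    ∃ z ∉ T, ∃ hz : z ∉ G.inducedComponent T t,
      (G.induce (G.inducedComponent T t)ᶜ).Reachable ⟨x, hx⟩ ⟨z, hz⟩ := by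
  induction p with
  | nil => exact ⟨_, hy, hx, .rfl⟩
  | @cons x b _ hxb q ih =>
    by_cases hxT : x ∈ T
    · have hb : b ∉ G.inducedComponent T t := fun hb ↦ hx (mem_inducedComponent_of_adj hxT hxb hb)
      obtain ⟨z, hzT, hz, hbz⟩ := ih hb hy
      exact ⟨z, hzT, hz, (Adj.reachable
        (show (G.induce (G.inducedComponent T t)ᶜ).Adj ⟨x, hx⟩ ⟨b, hb⟩ from hxb)).trans hbz⟩
    · exact ⟨x, hxT, hx, .rfl⟩

lemma connected_induce_compl_inducedComponent (hG : G.Connected)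
    (hT : (G.induce Tᶜ).Connected) : (G.induce (G.inducedComponent T t)ᶜ).Connected := by
  have hsub : Tᶜ ⊆ (G.inducedComponent T t)ᶜ := Set.compl_subset_compl.mpr inducedComponent_subset
  obtain ⟨⟨u, hu⟩⟩ := hT.nonempty
  rw [connected_iff_exists_forall_reachable]
  refine ⟨⟨u, hsub hu⟩, fun ⟨v, hv⟩ ↦ ?_⟩
  obtain ⟨z, hzT, hz, hvz⟩ := exists_reachable_compl_inducedComponent (hG v u).some hv hu
  have hzu := (hT ⟨z, hzT⟩ ⟨u, hu⟩).map (induceHomOfLE G hsub).toHom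
  exact (hvz.trans hzu).symm

lemma cutsetS_compl_inducedComponent_subset :
    cutsetS G (G.inducedComponent T t)ᶜ ⊆ cutsetS G Tᶜ := by
  rintro _ ⟨huv, u, v, rfl, hu, hv⟩
  rw [Set.notMem_compl_iff] at hv
  exact ⟨huv, u, v, rfl, fun huT ↦ hu (mem_inducedComponent_of_adj huT huv hv),
    Set.notMem_compl_iff.mpr (inducedComponent_subset hv)⟩

end InducedComponent

lemma cutsetS_union_subset {α : Type*} (G : SimpleGraph α) (U₁ U₂ : Set α) :
    cutsetS G (U₁ ∪ U₂) ⊆ cutsetS G U₁ ∪ cutsetS G U₂ := by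
  rintro _ ⟨huv, u, v, rfl, hu | hu, hv⟩
  · exact .inl ⟨huv, u, v, rfl, hu, fun h ↦ hv (.inl h)⟩
  · exact .inr ⟨huv, u, v, rfl, hu, fun h ↦ hv (.inr h)⟩

end SimpleGraph

/-- Given cuts `{U₁, W₁}`, `{U₂, W₂}` with sink `s ∈ W₁ ∩ W₂`, with `G[U₁]`,
`G[U₂]` connected and `U₁ ∩ U₂ ≠ ∅`, let `W₃` be the connected component of
`G[W₁ ∩ W₂]` containing `s` and `C₃ = {V \ W₃, W₃}`. Then `C₃` is a connected
cut and its cut-set is contained in the union of the cut-sets of the two cuts. -/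
theorem stmt_15 (G : SimpleGraph V) (hG : G.Connected) (s : V) (U1 U2 : Set V)
    (h1 : (G.induce U1).Connected) (h2 : (G.induce U2).Connected)
    (hs1 : s ∉ U1) (hs2 : s ∉ U2) (hI : (U1 ∩ U2).Nonempty) :
    ∀ W3 : Set V,
      W3 = {v | ∃ h : v ∈ U1ᶜ ∩ U2ᶜ,
        (G.induce (U1ᶜ ∩ U2ᶜ)).Reachable ⟨v, h⟩ ⟨s, ⟨hs1, hs2⟩⟩} →
      (G.induce W3).Connected ∧ (G.induce W3ᶜ).Connected ∧
        cutsetS G W3ᶜ ⊆ cutsetS G U1 ∪ cutsetS G U2 := by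
  rintro _ rfl
  have hT : (U1ᶜ ∩ U2ᶜ)ᶜ = U1 ∪ U2 := by rw [Set.compl_inter, compl_compl, compl_compl]
  have hU : (G.induce (U1ᶜ ∩ U2ᶜ)ᶜ).Connected :=
    hT ▸ induce_union_connected h1.preconnected h2.preconnected hI
  refine ⟨G.connected_induce_inducedComponent (U1ᶜ ∩ U2ᶜ) ⟨s, hs1, hs2⟩,
    connected_induce_compl_inducedComponent hG hU, ?_⟩
  exact cutsetS_compl_inducedComponent_subset.trans (hT ▸ cutsetS_union_subset G U1 U2)
end
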